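/- For every bounded function φ : ℤ → ℝ, every i ∈ ℤ and every t > 0, the function t ↦ e^{tA}[φ](i) = Σ_{j ∈ ℤ} (e^{tA})_{ij} φ(j) is differentiable and its derivative equals A applied to e^{tA}[φ], i.e. d/dt ( e^{tA}[φ](i) ) = Σ_{j ∈ ℤ} a_{ij} · e^{tA}[φ](j). Thus e^{tA} is the fundamental solution of the linear system U' = AU. -/

import Mathlib

/-!
Every power `Aⁿ` is banded (`(Aⁿ)_{ij} = 0` for `|i - j| > n`) and its rows have `ℓ¹`-norm at most
`(2γ)ⁿ` with `γ = max |α| |β|`, since each row of `A` has two entries of size at most `γ`. Hence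
Fubini turns `e^{sA}[φ](i)` into the exponential-type power series `∑ₙ sⁿ (Aⁿφ)(i) / n!`, whose
coefficients grow at most geometrically, so it may be differentiated termwise. Expanding
`A^{n+1} = A · Aⁿ` identifies the derivative with `A` applied to `e^{tA}[φ]`.
-/

/-- The dispersal matrix `A = (a_{ij})_{i,j ∈ ℤ}`: `a_{ij} = β` if `j = i ± 1` and `i` even,
`a_{ij} = α` if `j = i ± 1` and `i` odd, and `a_{ij} = 0` otherwise. -/
noncomputable def matA (α β : ℝ) (i j : ℤ) : ℝ :=
  if j = i + 1 ∨ j = i - 1 then (if Even i then β else α) else 0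

/-- Entrywise matrix powers: `(A⁰)_{ij} = δ_{ij}` and `(A^{n+1})_{ij} = Σ_{k ∈ ℤ} (Aⁿ)_{ik} a_{kj}`. -/
noncomputable def matApow (α β : ℝ) : ℕ → ℤ → ℤ → ℝ
  | 0 => fun i j => if i = j then 1 else 0
  | n + 1 => fun i j => ∑' k : ℤ, matApow α β n i k * matA α β k j

/-- The matrix exponential, entrywise: . -/
noncomputable def matExp (α β t : ℝ) (i j : ℤ) : ℝ :=
  ∑' n : ℕ, t ^ n * matApow α β n i j / (n.factorial : ℝ)

open Finset

theorem tsum_eq_add_of_eq_zero {ι M : Type*} [AddCommMonoid M] [TopologicalSpace M]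
    [DecidableEq ι] {f : ι → M} {a b : ι} (hab : a ≠ b) (h : ∀ k, k ≠ a → k ≠ b → f k = 0) :
    ∑' k, f k = f a + f b := by
  rw [tsum_eq_sum (s := {a, b}) fun k hk => ?_, sum_pair hab]
  simp only [mem_insert, mem_singleton, not_or] at hk
  exact h k hk.1 hk.2

theorem summable_pow_mul_div_factorial {c : ℕ → ℝ} {C r : ℝ} (hc : ∀ n, |c n| ≤ C * r ^ n)
    (s : ℝ) : Summable fun n => s ^ n * c n / n.factorial := by
  refine .of_norm_bounded ((Real.summable_pow_div_factorial (|s| * r)).mul_left C) fun n => ?_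
  rw [norm_div, norm_mul, norm_pow, Real.norm_eq_abs, Real.norm_eq_abs, RCLike.norm_natCast]
  calc |s| ^ n * |c n| / n.factorial ≤ |s| ^ n * (C * r ^ n) / n.factorial := by gcongr; exact hc n
    _ = C * ((|s| * r) ^ n / n.factorial) := by ring

theorem hasDerivAt_tsum_pow_mul_div_factorial {c : ℕ → ℝ} {C r : ℝ}
    (hc : ∀ n, |c n| ≤ C * r ^ n) (t : ℝ) :
    HasDerivAt (fun s => ∑' n, s ^ n * c n / n.factorial)
      (∑' n, t ^ n * c (n + 1) / n.factorial) t := by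
  have hshift : (fun s => ∑' n, s ^ n * c n / n.factorial) =
      fun s => c 0 + ∑' n, s ^ (n + 1) * c (n + 1) / (n + 1).factorial := by
    ext s
    rw [(summable_pow_mul_div_factorial hc s).tsum_eq_zero_add]
    simp
  rw [hshift]
  refine .const_add _ ?_
  obtain ⟨R, hR⟩ : ∃ R, R = |t| + 1 := ⟨_, rfl⟩
  have hR₀ : 0 < R := by rw [hR]; positivity
  have hderiv (n : ℕ) (y : ℝ) : HasDerivAt (fun s => s ^ (n + 1) * c (n + 1) / (n + 1).factorial)
      (y ^ n * c (n + 1) / n.factorial) y := by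
    refine (((hasDerivAt_pow (n + 1) y).mul_const (c (n + 1))).div_const
      ((n + 1).factorial : ℝ)).congr_deriv ?_
    rw [Nat.factorial_succ]
    push_cast
    field_simp
  refine hasDerivAt_tsum_of_isPreconnected (t := Set.Ioo (-R) R) (y₀ := 0)
    (u := fun n => C * r * ((R * r) ^ n / n.factorial))
    (g := fun n s => s ^ (n + 1) * c (n + 1) / (n + 1).factorial)
    (g' := fun n y => y ^ n * c (n + 1) / n.factorial)
    ((Real.summable_pow_div_factorial _).mul_left _) isOpen_Ioo isPreconnected_Ioo
    (fun n y _ => hderiv n y) (fun n y hy => ?_) (by simpa using hR₀) (by simp)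
    (abs_lt.1 (by linarith))
  have hy : |y| ≤ R := (abs_lt.2 hy).le
  rw [norm_div, norm_mul, norm_pow, Real.norm_eq_abs, Real.norm_eq_abs, RCLike.norm_natCast]
  calc |y| ^ n * |c (n + 1)| / n.factorial ≤ R ^ n * (C * r ^ (n + 1)) / n.factorial := by
        gcongr; exact hc _
    _ = C * r * ((R * r) ^ n / n.factorial) := by ring

section

variable {α β : ℝ}

def rowWeight (α β : ℝ) (i : ℤ) : ℝ := if Even i then β else α

theorem matA_eq_rowWeight {i j : ℤ} (h : j = i + 1 ∨ j = i - 1) :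
    matA α β i j = rowWeight α β i :=
  if_pos h

theorem matA_eq_zero {i j : ℤ} (h₁ : j ≠ i + 1) (h₂ : j ≠ i - 1) : matA α β i j = 0 :=
  if_neg (by tauto)

theorem abs_rowWeight_le (i : ℤ) : |rowWeight α β i| ≤ max |α| |β| := by
  unfold rowWeight
  split_ifs <;> simp

theorem tsum_matA_mul (i : ℤ) (g : ℤ → ℝ) :
    ∑' j, matA α β i j * g j = rowWeight α β i * (g (i + 1) + g (i - 1)) := by
  rw [tsum_eq_add_of_eq_zero (a := i + 1) (b := i - 1) (by omega)
      fun j h₁ h₂ => by rw [matA_eq_zero h₁ h₂, zero_mul],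
    matA_eq_rowWeight (.inl rfl), matA_eq_rowWeight (.inr rfl), mul_add]

theorem matApow_succ (n : ℕ) (i j : ℤ) :
    matApow α β (n + 1) i j =
      matApow α β n i (j - 1) * rowWeight α β (j - 1) +
        matApow α β n i (j + 1) * rowWeight α β (j + 1) := by
  change ∑' k, matApow α β n i k * matA α β k j = _
  rw [tsum_eq_add_of_eq_zero (a := j - 1) (b := j + 1) (by omega)
      fun k h₁ h₂ => by rw [matA_eq_zero (by omega) (by omega), mul_zero],
    matA_eq_rowWeight (by omega), matA_eq_rowWeight (by omega)]

theorem matApow_succ' (n : ℕ) (i j : ℤ) :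
    matApow α β (n + 1) i j =
      rowWeight α β i * (matApow α β n (i + 1) j + matApow α β n (i - 1) j) := by
  induction n generalizing j with
  | zero =>
    rw [matApow_succ]
    simp only [matApow]
    split_ifs <;> first | omega | (subst_vars; ring)
  | succ n ih =>
    rw [matApow_succ, ih, ih, matApow_succ (i := i + 1), matApow_succ (i := i - 1)]
    ring

theorem matApow_eq_zero {n : ℕ} {i j : ℤ} (h : n < (j - i).natAbs) : matApow α β n i j = 0 := by
  induction n generalizing j with
  | zero => exact if_neg (by omega)
  | succ n ih => rw [matApow_succ, ih (by omega), ih (by omega), zero_mul, zero_mul, add_zero]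

theorem summable_matApow_mul (n : ℕ) (i : ℤ) (g : ℤ → ℝ) :
    Summable fun j => matApow α β n i j * g j :=
  summable_of_ne_finset_zero (s := Icc (i - n) (i + n)) fun j hj => by
    rw [matApow_eq_zero (by simp only [mem_Icc] at hj; omega), zero_mul]

noncomputable def matApowApply (α β : ℝ) (n : ℕ) (φ : ℤ → ℝ) (i : ℤ) : ℝ :=
  ∑' j, matApow α β n i j * φ j

variable {φ : ℤ → ℝ}

theorem matApowApply_succ (n : ℕ) (i : ℤ) :
    matApowApply α β (n + 1) φ i =
      rowWeight α β i * (matApowApply α β n φ (i + 1) + matApowApply α β n φ (i - 1)) := by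
  unfold matApowApply
  rw [← (summable_matApow_mul n (i + 1) φ).tsum_add (summable_matApow_mul n (i - 1) φ),
    ← tsum_mul_left]
  exact tsum_congr fun j => by rw [matApow_succ']; ring

variable {M : ℝ}

theorem tsum_abs_matApow_mul_le (hM : ∀ j, |φ j| ≤ M) (n : ℕ) (i : ℤ) :
    ∑' j, |matApow α β n i j * φ j| ≤ (2 * max |α| |β|) ^ n * M := by
  induction n generalizing i with
  | zero =>
    rw [tsum_eq_single i fun j hj => by simp [matApow, Ne.symm hj]]
    simpa [matApow] using hM i
  | succ n ih =>
    set γ := max |α| |β|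
    have hS (k : ℤ) := (summable_matApow_mul (α := α) (β := β) n k φ).abs
    calc ∑' j, |matApow α β (n + 1) i j * φ j|
        ≤ ∑' j, γ * (|matApow α β n (i + 1) j * φ j| + |matApow α β n (i - 1) j * φ j|) := by
          refine (summable_matApow_mul _ _ _).abs.tsum_le_tsum (fun j => ?_)
            (((hS _).add (hS _)).mul_left γ)
          rw [matApow_succ', mul_assoc, abs_mul, add_mul]
          exact mul_le_mul (abs_rowWeight_le i) (abs_add_le _ _) (abs_nonneg _)
            ((abs_nonneg _).trans (abs_rowWeight_le i))
      _ = γ * (∑' j, |matApow α β n (i + 1) j * φ j| + ∑' j, |matApow α β n (i - 1) j * φ j|) := by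
          rw [tsum_mul_left, (hS _).tsum_add (hS _)]
      _ ≤ γ * ((2 * γ) ^ n * M + (2 * γ) ^ n * M) := by gcongr <;> exact ih _
      _ = (2 * γ) ^ (n + 1) * M := by ring

theorem abs_matApowApply_le (hM : ∀ j, |φ j| ≤ M) (n : ℕ) (i : ℤ) :
    |matApowApply α β n φ i| ≤ M * (2 * max |α| |β|) ^ n := by
  have h := norm_tsum_le_tsum_norm (summable_matApow_mul (α := α) (β := β) n i φ).norm
  simp only [Real.norm_eq_abs] at h
  exact h.trans ((tsum_abs_matApow_mul_le hM n i).trans_eq (mul_comm _ _))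

theorem tsum_matExp_mul (hM : ∀ j, |φ j| ≤ M) (s : ℝ) (i : ℤ) :
    ∑' j, matExp α β s i j * φ j = ∑' n, s ^ n * matApowApply α β n φ i / n.factorial := by
  set F : ℕ → ℤ → ℝ := fun n j => s ^ n / n.factorial * (matApow α β n i j * φ j)
  have hrow (n : ℕ) : Summable fun j => ‖F n j‖ :=
    ((summable_matApow_mul n i φ).mul_left (s ^ n / n.factorial)).norm
  have hbound (n : ℕ) : ∑' j, ‖F n j‖ ≤ M * ((|s| * (2 * max |α| |β|)) ^ n / n.factorial) :=
    calc ∑' j, ‖F n j‖ = |s| ^ n / n.factorial * ∑' j, |matApow α β n i j * φ j| := by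
          simp only [F, norm_mul, norm_div, norm_pow, Real.norm_eq_abs, RCLike.norm_natCast,
            abs_mul, tsum_mul_left]
      _ ≤ |s| ^ n / n.factorial * ((2 * max |α| |β|) ^ n * M) := by
          gcongr; exact tsum_abs_matApow_mul_le hM n i
      _ = M * ((|s| * (2 * max |α| |β|)) ^ n / n.factorial) := by ring
  have hF : Summable (Function.uncurry F) :=
    .of_norm <| (summable_prod_of_nonneg (f := fun p => ‖Function.uncurry F p‖)
      fun _ => norm_nonneg _).2 ⟨hrow, .of_nonneg_of_le
        (fun n => tsum_nonneg fun _ => norm_nonneg _) hbound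
        ((Real.summable_pow_div_factorial _).mul_left M)⟩
  calc ∑' j, matExp α β s i j * φ j = ∑' j, ∑' n, F n j :=
        tsum_congr fun j => by
          rw [matExp, ← tsum_mul_right]
          exact tsum_congr fun n => by ring
    _ = ∑' n, ∑' j, F n j := hF.tsum_comm
    _ = ∑' n, s ^ n * matApowApply α β n φ i / n.factorial :=
        tsum_congr fun n => by
          rw [tsum_mul_left, matApowApply]
          ring

end

theorem matExp_fundamental_solution_general (α β : ℝ)
    (φ : ℤ → ℝ) (hφ : ∃ M : ℝ, ∀ i : ℤ, |φ i| ≤ M) (i : ℤ) (t : ℝ) :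
    HasDerivAt (fun s : ℝ => ∑' j : ℤ, matExp α β s i j * φ j)
      (∑' j : ℤ, matA α β i j * ∑' k : ℤ, matExp α β t j k * φ k) t := by
  obtain ⟨M, hM⟩ := hφ
  have hc (j : ℤ) (n : ℕ) := abs_matApowApply_le (α := α) (β := β) hM n j
  have hRHS : ∑' j, matA α β i j * ∑' k, matExp α β t j k * φ k =
      ∑' n, t ^ n * matApowApply α β (n + 1) φ i / n.factorial := by
    rw [tsum_matA_mul, tsum_matExp_mul hM, tsum_matExp_mul hM,
      ← (summable_pow_mul_div_factorial (hc _) t).tsum_add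
        (summable_pow_mul_div_factorial (hc _) t), ← tsum_mul_left]
    exact tsum_congr fun n => by rw [matApowApply_succ]; ring
  rw [hRHS]
  simp only [tsum_matExp_mul hM]
  exact hasDerivAt_tsum_pow_mul_div_factorial (hc i) t

/-- For every bounded `φ : ℤ → ℝ`, every `i ∈ ℤ` and every `t > 0`, the function
`t ↦ e^{tA}[φ](i) = Σ_j (e^{tA})_{ij} φ(j)` is differentiable with derivative
`Σ_j a_{ij} e^{tA}[φ](j)`; thus `e^{tA}` is the fundamental solution of `U' = AU`. -/
theorem matExp_fundamental_solution (α β : ℝ) (hα : 0 < α) (hβ : 0 < β)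
    (φ : ℤ → ℝ) (hφ : ∃ M : ℝ, ∀ i : ℤ, |φ i| ≤ M) (i : ℤ) (t : ℝ) (ht : 0 < t) :
    HasDerivAt (fun s : ℝ => ∑' j : ℤ, matExp α β s i j * φ j)
      (∑' j : ℤ, matA α β i j * ∑' k : ℤ, matExp α β t j k * φ k) t :=
  matExp_fundamental_solution_general α β φ hφ i t
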